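/- For every integer k̄ with m·⌈2W_m − 1⌉ ≤ k̄ ≤ m·n one has ∑_{k=k̄}^{mn} q̃^{(n)}(k) ≤ 2·G·m · W_m^{⌊k̄/m⌋} / ⌊k̄/m⌋!. -/

import Mathlib

open Finset

open scoped Classical

noncomputable section

namespace HScut

/-- Level of a jump path `s : Fin n → ℤ` at time `t` (sum of the first `t` jumps). -/
def levelAt (n : ℕ) (s : Fin n → ℤ) (t : ℕ) : ℤ :=
  ∑ i ∈ Finset.univ.filter (fun i : Fin n => (i : ℕ) < t), s i

/-- Jump paths of length `n` with jumps of amplitude at most `m`. -/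
def paths (n m : ℕ) : Finset (Fin n → ℤ) :=
  Fintype.piFinset fun _ => Finset.Icc (-(m : ℤ)) (m : ℤ)

/-- Weight `π(s) = ∏ q (s i)` of a jump path. -/
def pathWeight (n : ℕ) (q : ℤ → ℝ) (s : Fin n → ℤ) : ℝ :=
  ∏ i, q (s i)

/-- Modified weight `π̃(s)`, where each `q (±i)` (`i ≠ 0`) is replaced by `max (q i) (q (-i))`
(which equals `w_i / n`). -/
def modWeight (n : ℕ) (q : ℤ → ℝ) (s : Fin n → ℤ) : ℝ :=
  ∏ i, (if s i = 0 then q 0 else max (q (s i)) (q (-s i)))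

/-- `q^{(n)}(k)`: probability of a net balance of `k` cumulative jumps at maturity. -/
def qfull (n m : ℕ) (q : ℤ → ℝ) (k : ℤ) : ℝ :=
  ∑ s ∈ (paths n m).filter (fun s => levelAt n s n = k), pathWeight n q s

/-- `q̃^{(n)}(k)`: enlarged probability of a net balance of `k` cumulative jumps at maturity. -/
def qtilde (n m : ℕ) (q : ℤ → ℝ) (k : ℤ) : ℝ :=
  ∑ s ∈ (paths n m).filter (fun s => levelAt n s n = k), modWeight n q s

/-- `q^{k̄,(n)}(k)`: probability of a net balance of `k` jumps at maturity while reaching at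
some time a net balance higher than `k̄`. -/
def qup (n m : ℕ) (q : ℤ → ℝ) (kbar : ℕ) (k : ℤ) : ℝ :=
  ∑ s ∈ (paths n m).filter
      (fun s => levelAt n s n = k ∧ ∃ t ≤ n, (kbar : ℤ) + 1 ≤ levelAt n s t),
    pathWeight n q s

/-- `q_{l̄}^{(n)}(k)`: probability of a net balance of `k` jumps at maturity while reaching at
some time a net balance lower than `-l̄`. -/
def qdown (n m : ℕ) (q : ℤ → ℝ) (lbar : ℕ) (k : ℤ) : ℝ :=
  ∑ s ∈ (paths n m).filter
      (fun s => levelAt n s n = k ∧ ∃ t ≤ n, levelAt n s t ≤ -(lbar : ℤ) - 1),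
    pathWeight n q s

/-- `q^{cut,(n)}(k)`: probability of reaching level `k` at maturity without ever leaving the
band `[-l̄, k̄]`. -/
def qcut (n m : ℕ) (q : ℤ → ℝ) (kbar lbar : ℕ) (k : ℤ) : ℝ :=
  ∑ s ∈ (paths n m).filter
      (fun s => levelAt n s n = k ∧
        ∀ t ≤ n, -(lbar : ℤ) ≤ levelAt n s t ∧ levelAt n s t ≤ (kbar : ℤ)),
    pathWeight n q s

/-- `P(j) = C(n,j) p^j (1-p)^(n-j)`. -/
def binomP (n : ℕ) (p : ℝ) (j : ℕ) : ℝ :=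
  (n.choose j : ℝ) * p ^ j * (1 - p) ^ (n - j)

/-- Put payoff at the terminal node `(n, j, k)`. -/
def putPayoff (n : ℕ) (S0 K σ dt h : ℝ) (j : ℕ) (k : ℤ) : ℝ :=
  max (K - S0 * Real.exp ((2 * (j : ℝ) - (n : ℝ)) * (σ * Real.sqrt dt) + h * (k : ℝ))) 0

/-- European put value `V` on the full tree. -/
def Vput (n m : ℕ) (q : ℤ → ℝ) (p S0 K σ τ h r : ℝ) : ℝ :=
  Real.exp (-(r * τ)) *
    ∑ k ∈ Finset.Icc (-((m : ℤ) * n)) ((m : ℤ) * n), ∑ j ∈ Finset.range (n + 1),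
      putPayoff n S0 K σ (τ / n) h j k * binomP n p j * qfull n m q k

/-- European put value `V^{TT}` on the truncated tree. -/
def VTT (n m : ℕ) (q : ℤ → ℝ) (p S0 K σ τ h r : ℝ) (kbar lbar : ℕ) : ℝ :=
  Real.exp (-(r * τ)) *
    ∑ k ∈ Finset.Icc (-(lbar : ℤ)) (kbar : ℤ), ∑ j ∈ Finset.range (n + 1),
      putPayoff n S0 K σ (τ / n) h j k * binomP n p j * qcut n m q kbar lbar k

/-- The sequence `W_i`: `W₁ = w₁`, `W_{i+1} = w_{i+1} + W_i^{(i+1)/i}` (real powers). -/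
def Wseq (w : ℕ → ℝ) : ℕ → ℝ
  | 0 => 0
  | 1 => w 1
  | (i + 2) => w (i + 2) + Wseq w (i + 1) ^ (((i : ℝ) + 2) / ((i : ℝ) + 1))

/-- `M_i = max { W_i, W_i^{(1-i)/i} }` (real powers). -/
def Mseq (w : ℕ → ℝ) (i : ℕ) : ℝ :=
  max (Wseq w i) (Wseq w i ^ ((1 - (i : ℝ)) / (i : ℝ)))

/-- `G = 2 m max{W_m, 1} e^{W_m} ∏_{i=1}^{m-1} M_i²`. -/
def Gconst (w : ℕ → ℝ) (m : ℕ) : ℝ :=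
  2 * m * max (Wseq w m) 1 * Real.exp (Wseq w m) * ∏ i ∈ Finset.Icc 1 (m - 1), (Mseq w i) ^ 2

/-- Value of the underlying at a node with (real) time index `i`, `j` up Brownian moves and
net jump level `l`. -/
def Sval (S0 σ dt h : ℝ) (i : ℝ) (j : ℕ) (l : ℤ) : ℝ :=
  S0 * Real.exp ((2 * (j : ℝ) - i) * (σ * Real.sqrt dt) + (l : ℝ) * h)

/-- Full backward European put price; `VEfull … d j l` is the value `V_E(n-d, j, l)`
(`d` = number of remaining steps). -/
def VEfull (n m : ℕ) (q : ℤ → ℝ) (p dt S0 K σ h r : ℝ) : ℕ → ℕ → ℤ → ℝ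
  | 0, j, l => max (K - Sval S0 σ dt h (n : ℝ) j l) 0
  | (d + 1), j, l =>
      Real.exp (-(r * dt)) *
        ∑ k ∈ Finset.Icc (-(m : ℤ)) (m : ℤ),
          (VEfull n m q p dt S0 K σ h r d (j + 1) (l + k) * p +
            VEfull n m q p dt S0 K σ h r d j (l + k) * (1 - p)) * q k

/-- Full backward American put price; `VAfull … d j l` is the value `V_A(n-d, j, l)`. -/
def VAfull (n m : ℕ) (q : ℤ → ℝ) (p dt S0 K σ h r : ℝ) : ℕ → ℕ → ℤ → ℝ
  | 0, j, l => max (K - Sval S0 σ dt h (n : ℝ) j l) 0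
  | (d + 1), j, l =>
      max
        (Real.exp (-(r * dt)) *
          ∑ k ∈ Finset.Icc (-(m : ℤ)) (m : ℤ),
            (VAfull n m q p dt S0 K σ h r d (j + 1) (l + k) * p +
              VAfull n m q p dt S0 K σ h r d j (l + k) * (1 - p)) * q k)
        (K - Sval S0 σ dt h ((n : ℝ) - (d + 1)) j l)

/-- Truncated backward European put price with boundary value `b`;
`VEtr … d j l` is the value `V_E^b(n-d, j, l)`. -/
def VEtr (n m : ℕ) (q : ℤ → ℝ) (p dt S0 K σ h r b : ℝ) (kbar lbar : ℕ) :
    ℕ → ℕ → ℤ → ℝ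
  | 0, j, l =>
      if -(lbar : ℤ) ≤ l ∧ l ≤ (kbar : ℤ) then max (K - Sval S0 σ dt h (n : ℝ) j l) 0 else b
  | (d + 1), j, l =>
      if -(lbar : ℤ) ≤ l ∧ l ≤ (kbar : ℤ) then
        Real.exp (-(r * dt)) *
          ∑ k ∈ Finset.Icc (-(m : ℤ)) (m : ℤ),
            (VEtr n m q p dt S0 K σ h r b kbar lbar d (j + 1) (l + k) * p +
              VEtr n m q p dt S0 K σ h r b kbar lbar d j (l + k) * (1 - p)) * q k
      else b

/-- Truncated backward American put price with boundary value `b`;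
`VAtr … d j l` is the value `V_A^b(n-d, j, l)`. -/
def VAtr (n m : ℕ) (q : ℤ → ℝ) (p dt S0 K σ h r b : ℝ) (kbar lbar : ℕ) :
    ℕ → ℕ → ℤ → ℝ
  | 0, j, l =>
      if -(lbar : ℤ) ≤ l ∧ l ≤ (kbar : ℤ) then max (K - Sval S0 σ dt h (n : ℝ) j l) 0 else b
  | (d + 1), j, l =>
      if -(lbar : ℤ) ≤ l ∧ l ≤ (kbar : ℤ) then
        max
          (Real.exp (-(r * dt)) *
            ∑ k ∈ Finset.Icc (-(m : ℤ)) (m : ℤ),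
              (VAtr n m q p dt S0 K σ h r b kbar lbar d (j + 1) (l + k) * p +
                VAtr n m q p dt S0 K σ h r b kbar lbar d j (l + k) * (1 - p)) * q k)
          (K - Sval S0 σ dt h ((n : ℝ) - (d + 1)) j l)
      else b

/-- The sum, over all jump-path prefixes that first exit the band `[-l̄, k̄]` at some time
`1 ≤ i ≤ n`, of the prefix probability times `b e^{-r i Δt}`. -/
def exitSum (n m : ℕ) (q : ℤ → ℝ) (r dt : ℝ) (kbar lbar : ℕ) (b : ℝ) : ℝ :=
  ∑ i ∈ Finset.Icc 1 n,
    ∑ y ∈ (paths i m).filter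
        (fun y =>
          (∀ t < i, -(lbar : ℤ) ≤ levelAt i y t ∧ levelAt i y t ≤ (kbar : ℤ)) ∧
          ¬(-(lbar : ℤ) ≤ levelAt i y i ∧ levelAt i y i ≤ (kbar : ℤ))),
      pathWeight i q y * (b * Real.exp (-(r * (i : ℝ) * dt)))

end HScut

/-!
Bounding the level by the sum of the positive jumps, the tail is at most the total modified
weight of the paths whose positive jumps add up to at least `k̄`. Recording only how often each
positive jump `i` occurs (the non-positive jumps have total weight at most one), an induction on
the number of steps bounds this by the part of degree `≥ k̄` of `∏_{i=1}^m exp (w_i x^i)` at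
`x = 1`. An induction on `m` bounds the part of degree `≥ m j` of that product by
`e^{w_1 + ⋯ + w_m} ∏_{i<m} M_i · W_m^j / j!`: the new variable enters through a binomial
convolution of `w_m` with `W_{m-1}^{m/(m-1)}`, whence the recursion defining `W`. Telescoping
`∑ w_i` against that recursion finally gives `e^{∑ w_i} ≤ 4 e^{W_m} ∏_{i<m} M_i`.
-/

open Real
open scoped Nat

theorem pow_succ_add_mul_pow_mul_le_add_pow {x y : ℝ} (hx : 0 ≤ x) (hy : 0 ≤ y) (k : ℕ) :
    x ^ (k + 1) + (k + 1) * x ^ k * y ≤ (x + y) ^ (k + 1) := by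
  induction k with
  | zero => simp
  | succ k ih =>
    calc x ^ (k + 1 + 1) + ((k + 1 : ℕ) + 1) * x ^ (k + 1) * y
        = (x + y) * (x ^ (k + 1) + (k + 1) * x ^ k * y) - (k + 1) * (x ^ k * y * y) := by
          push_cast; ring
      _ ≤ (x + y) * (x ^ (k + 1) + (k + 1) * x ^ k * y) :=
          sub_le_self _ (by positivity)
      _ ≤ (x + y) * (x + y) ^ (k + 1) := by gcongr
      _ = (x + y) ^ (k + 1 + 1) := by ring

theorem pow_succ_div_factorial_add_le {x y : ℝ} (hx : 0 ≤ x) (hy : 0 ≤ y) (k : ℕ) :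
    x ^ (k + 1) / (k + 1)! + y * x ^ k / k ! ≤ (x + y) ^ (k + 1) / (k + 1)! := by
  have hk : ((k + 1)! : ℝ) = (k + 1) * k ! := by push_cast [Nat.factorial_succ]; ring
  have hk0 : (0 : ℝ) < k ! := by positivity
  rw [hk, div_add_div _ _ (by positivity) hk0.ne', div_le_div_iff₀ (by positivity) (by positivity)]
  have := pow_succ_add_mul_pow_mul_le_add_pow hx hy k
  have hmul := mul_le_mul_of_nonneg_right this (by positivity : (0 : ℝ) ≤ (k + 1) * k ! * k !)
  nlinarith [hmul]

theorem Finset.prod_add_sum_mul_prod_erase_le_prod_add {ι : Type*} [DecidableEq ι]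
    (s : Finset ι) {a b : ι → ℝ} (ha : ∀ i ∈ s, 0 ≤ a i) (hb : ∀ i ∈ s, 0 ≤ b i) :
    ∏ i ∈ s, a i + ∑ i ∈ s, b i * ∏ j ∈ s.erase i, a j ≤ ∏ i ∈ s, (a i + b i) := by
  induction s using Finset.induction_on with
  | empty => simp
  | @insert j s hj ih =>
    simp only [Finset.forall_mem_insert] at ha hb
    have hS : 0 ≤ ∑ i ∈ s, b i * ∏ j' ∈ s.erase i, a j' :=
      sum_nonneg fun i hi => mul_nonneg (hb.2 i hi)
        (prod_nonneg fun x hx => ha.2 x (mem_of_mem_erase hx))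
    have herase : ∀ i ∈ s, b i * ∏ j' ∈ (insert j s).erase i, a j'
        = a j * (b i * ∏ j' ∈ s.erase i, a j') := by
      intro i hi
      rw [erase_insert_of_ne (ne_of_mem_of_not_mem hi hj).symm,
        prod_insert fun h => hj (mem_of_mem_erase h)]
      ring
    rw [prod_insert hj, prod_insert hj, sum_insert hj, erase_insert hj, sum_congr rfl herase,
      ← mul_sum]
    have key := mul_le_mul_of_nonneg_left (ih ha.2 hb.2) (add_nonneg ha.1 hb.1)
    nlinarith [mul_nonneg hb.1 hS]

theorem pow_div_factorial_le_mul {w : ℝ} (hw : 0 ≤ w) {j a : ℕ} (h : j ≤ a) :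
    w ^ a / a ! ≤ w ^ j / j ! * (w ^ (a - j) / (a - j)!) := by
  have hfac : (j ! * (a - j)! : ℝ) ≤ a ! := by
    exact_mod_cast Nat.le_of_dvd (Nat.factorial_pos a) (Nat.factorial_mul_factorial_dvd_factorial h)
  rw [div_mul_div_comm, ← pow_add, Nat.add_sub_cancel' h]
  gcongr

theorem sum_pow_div_factorial_le_exp {w : ℝ} (hw : 0 ≤ w) (s : Finset ℕ) :
    ∑ b ∈ s, w ^ b / b ! ≤ exp w := by
  obtain ⟨N, hN⟩ : ∃ N, s ⊆ Finset.range N := ⟨s.sup id + 1, fun b hb =>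
    Finset.mem_range.2 (Nat.lt_succ_of_le (Finset.le_sup (f := id) hb))⟩
  exact (Finset.sum_le_sum_of_subset_of_nonneg hN fun b _ _ => by positivity).trans
    (sum_le_exp_of_nonneg hw N)

theorem sum_filter_lt_pow_div_factorial_le {w : ℝ} (hw : 0 ≤ w) (s : Finset ℕ) (j : ℕ) :
    ∑ a ∈ s with j < a, w ^ a / a ! ≤ w ^ j / j ! * (exp w - 1) := by
  set T := {a ∈ s | j < a}
  have hshift : ∑ b ∈ T.image (fun a : ℕ => a - j), w ^ b / b ! =
      ∑ a ∈ T, w ^ (a - j) / (a - j)! := by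
    rw [Finset.sum_image]
    intro a ha b hb hab
    simp only [T, Finset.mem_coe, Finset.mem_filter] at ha hb hab
    omega
  have hzero : 0 ∉ T.image (fun a : ℕ => a - j) := by
    simp only [T, Finset.mem_image, Finset.mem_filter]
    omega
  have htail : ∑ a ∈ T, w ^ (a - j) / (a - j)! ≤ exp w - 1 := by
    have := sum_pow_div_factorial_le_exp hw (insert 0 (T.image (fun a : ℕ => a - j)))
    rw [Finset.sum_insert hzero, hshift] at this
    simp only [pow_zero, Nat.factorial_zero, Nat.cast_one, div_one] at this
    linarith
  calc ∑ a ∈ T, w ^ a / a !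
      ≤ ∑ a ∈ T, w ^ j / j ! * (w ^ (a - j) / (a - j)!) :=
        Finset.sum_le_sum fun a ha => pow_div_factorial_le_mul hw (Finset.mem_filter.1 ha).2.le
    _ ≤ w ^ j / j ! * (exp w - 1) := by
        rw [← Finset.mul_sum]
        gcongr

theorem sum_filter_le_pow_div_factorial_le {w : ℝ} (hw : 0 ≤ w) (s : Finset ℕ) (j : ℕ) :
    ∑ a ∈ s with j ≤ a, w ^ a / a ! ≤ w ^ j / j ! * exp w := by
  have hsub : {a ∈ s | j ≤ a} ⊆ insert j {a ∈ s | j < a} := by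
    intro a ha
    rw [Finset.mem_filter] at ha
    rw [Finset.mem_insert, Finset.mem_filter]
    rcases ha.2.eq_or_lt with h | h
    exacts [Or.inl h.symm, Or.inr ⟨ha.1, h⟩]
  calc ∑ a ∈ s with j ≤ a, w ^ a / a !
      ≤ ∑ a ∈ insert j {a ∈ s | j < a}, w ^ a / a ! :=
        Finset.sum_le_sum_of_subset_of_nonneg hsub fun a _ _ => by positivity
    _ = w ^ j / j ! + ∑ a ∈ s with j < a, w ^ a / a ! :=
        Finset.sum_insert (by simp)
    _ ≤ w ^ j / j ! * exp w := by
        linarith [sum_filter_lt_pow_div_factorial_le hw s j]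

theorem sum_range_pow_div_factorial_mul (x y : ℝ) (j : ℕ) :
    ∑ a ∈ range (j + 1), x ^ a / a ! * (y ^ (j - a) / (j - a)!) = (x + y) ^ j / j ! := by
  rw [add_pow, Finset.sum_div]
  refine Finset.sum_congr rfl fun a ha => ?_
  have hfac : (j.choose a * a ! * (j - a)! : ℝ) = j ! := by
    exact_mod_cast Nat.choose_mul_factorial_mul_factorial (Finset.mem_range_succ_iff.1 ha)
  rw [div_mul_div_comm, div_eq_div_iff (by positivity) (by positivity), ← hfac]
  ring

theorem sum_pow_div_factorial_mul_le {v X M D : ℝ} (hv : 0 ≤ v) (hX : 0 ≤ X) (hM : 1 ≤ M)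
    (hD : 0 ≤ D) {E : ℕ → ℝ} {j : ℕ} (hle : ∀ a ≤ j, E a ≤ D * (M * (X ^ (j - a) / (j - a)!)))
    (hgt : ∀ a, j < a → E a ≤ D) (s : Finset ℕ) :
    ∑ a ∈ s, v ^ a / a ! * E a ≤ D * M * exp v * ((v + X) ^ j / j !) := by
  have hlow : ∑ a ∈ s with a ≤ j, v ^ a / a ! * (X ^ (j - a) / (j - a)!) ≤ (v + X) ^ j / j ! := by
    rw [← sum_range_pow_div_factorial_mul]
    refine Finset.sum_le_sum_of_subset_of_nonneg (fun a ha => ?_) fun a _ _ => by positivity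
    exact Finset.mem_range_succ_iff.2 (Finset.mem_filter.1 ha).2
  have hhigh : ∑ a ∈ s with j < a, v ^ a / a ! ≤ (v + X) ^ j / j ! * (exp v - 1) := by
    refine (sum_filter_lt_pow_div_factorial_le hv s j).trans ?_
    gcongr
    · linarith [add_one_le_exp v]
    · linarith
  rw [← Finset.sum_filter_add_sum_filter_not _ (· ≤ j)]
  simp only [not_le]
  calc ∑ a ∈ s with a ≤ j, v ^ a / a ! * E a + ∑ a ∈ s with j < a, v ^ a / a ! * E a
      ≤ ∑ a ∈ s with a ≤ j, v ^ a / a ! * (D * (M * (X ^ (j - a) / (j - a)!))) +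
        ∑ a ∈ s with j < a, v ^ a / a ! * D := by
        gcongr with a ha a ha
        · exact hle a (Finset.mem_filter.1 ha).2
        · exact hgt a (Finset.mem_filter.1 ha).2
    _ = D * M * ∑ a ∈ s with a ≤ j, v ^ a / a ! * (X ^ (j - a) / (j - a)!) +
        D * ∑ a ∈ s with j < a, v ^ a / a ! := by
        rw [Finset.mul_sum, Finset.mul_sum]
        congr 1 <;> refine Finset.sum_congr rfl fun a _ => by ring
    _ ≤ D * M * ((v + X) ^ j / j !) + D * ((v + X) ^ j / j ! * (exp v - 1)) := by gcongr
    _ ≤ D * M * exp v * ((v + X) ^ j / j !) := by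
        have hprod := mul_nonneg (sub_nonneg.2 hM) (sub_nonneg.2 (one_le_exp hv))
        have hvX : 0 ≤ (v + X) ^ j / j ! := by positivity
        nlinarith [mul_nonneg (mul_nonneg hD hvX) hprod]

theorem rpow_le_max_rpow {W a e : ℝ} (hW : 0 < W) (hae : a ≤ e) (he : e ≤ 0) :
    W ^ e ≤ max W (W ^ a) := by
  rcases le_or_gt 1 W with h1 | h1
  · exact (rpow_le_one_of_one_le_of_nonpos h1 he).trans (h1.trans (le_max_left _ _))
  · exact (rpow_le_rpow_of_exponent_ge hW h1.le hae).trans (le_max_right _ _)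

theorem one_le_max_rpow {W a : ℝ} (hW : 0 < W) (ha : a ≤ 0) : 1 ≤ max W (W ^ a) := by
  simpa using rpow_le_max_rpow hW ha le_rfl

theorem pow_add_div_div_factorial_le {W : ℝ} (hW : 0 < W) {n : ℕ} (hn : 1 ≤ n) (b : ℕ) :
    W ^ (b + b / n) / (b + b / n)! ≤
      max W (W ^ ((1 - n : ℝ) / n)) * ((W ^ (((n : ℝ) + 1) / n)) ^ b / b !) := by
  have hnR : (0 : ℝ) < n := by exact_mod_cast hn
  set t := b / n
  have hlow : (1 - n : ℝ) / n ≤ t - (b : ℝ) / n := by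
    have hb : (b : ℝ) + 1 ≤ n * t + n := by
      exact_mod_cast Nat.lt_mul_div_succ b hn
    rw [div_le_iff₀ hnR, sub_mul, div_mul_cancel₀ _ hnR.ne']
    linarith
  have hhigh : (t : ℝ) - (b : ℝ) / n ≤ 0 := by
    rw [sub_nonpos, le_div_iff₀ hnR]
    exact_mod_cast Nat.div_mul_le_self b n
  have hWt : W ^ t ≤ max W (W ^ ((1 - n : ℝ) / n)) * W ^ ((b : ℝ) / n) := by
    rw [← rpow_natCast, ← sub_add_cancel (t : ℝ) ((b : ℝ) / n), rpow_add hW]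
    gcongr
    exact rpow_le_max_rpow hW hlow hhigh
  have hpow : (W ^ (((n : ℝ) + 1) / n)) ^ b = W ^ b * W ^ ((b : ℝ) / n) := by
    rw [← rpow_natCast, ← rpow_mul hW.le, ← rpow_natCast W b, ← rpow_add hW]
    congr 1
    field_simp
  have hfac : (b ! : ℝ) ≤ (b + t)! := by exact_mod_cast Nat.factorial_le (Nat.le_add_right b t)
  calc W ^ (b + t) / (b + t)!
      ≤ W ^ b * W ^ t / b ! := by rw [pow_add]; gcongr
    _ ≤ W ^ b * (max W (W ^ ((1 - n : ℝ) / n)) * W ^ ((b : ℝ) / n)) / b ! := by gcongr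
    _ = max W (W ^ ((1 - n : ℝ) / n)) * ((W ^ (((n : ℝ) + 1) / n)) ^ b / b !) := by
        rw [hpow]; ring

theorem exp_sub_rpow_le_max_rpow {W p : ℝ} (hW : 0 < W) (hp : 2 ≤ p) :
    exp (W - W ^ ((p + 1) / p)) ≤ max W (W ^ ((1 - p) / p)) := by
  have hp0 : 0 < p := by linarith
  rcases le_or_gt 1 W with h1 | h1
  · have hmono : W ≤ W ^ ((p + 1) / p) := by
      simpa using rpow_le_rpow_of_exponent_le h1 (show (1 : ℝ) ≤ (p + 1) / p by
        rw [le_div_iff₀ hp0]; linarith)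
    calc exp (W - W ^ ((p + 1) / p)) ≤ 1 := exp_le_one_iff.2 (by linarith)
      _ ≤ _ := one_le_max_rpow hW (div_nonpos_of_nonpos_of_nonneg (by linarith) hp0.le)
  · -- with `u = W ^ (1/p)`: `W - W u ≤ 1 - u ≤ -log u = -(log W) / p ≤ (p - 1) / p * (-log W)`
    set u := W ^ (1 / p)
    have hu : 0 < u := rpow_pos_of_pos hW _
    have hsplit : W ^ ((p + 1) / p) = W * u := by
      rw [show (p + 1) / p = 1 + 1 / p by field_simp, rpow_add hW, rpow_one]
    have hlogu : log u = log W / p := by rw [log_rpow hW]; ring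
    have hlogW : log W ≤ 0 := log_nonpos hW.le h1.le
    have hu1 : u ≤ 1 := rpow_le_one hW.le h1.le (by positivity)
    have hlog : 1 - u ≤ -log u := by linarith [log_le_sub_one_of_pos hu]
    have hdiv : -log W / p ≤ (p - 1) / p * -log W := by
      rw [div_mul_eq_mul_div, div_le_div_iff_of_pos_right hp0]
      nlinarith
    rw [← exp_log (rpow_pos_of_pos hW ((1 - p) / p)), log_rpow hW, hsplit]
    refine (exp_le_exp.2 ?_).trans (le_max_right _ _)
    have hWu : W * (1 - u) ≤ 1 - u := mul_le_of_le_one_left (by linarith) h1.le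
    have hsign : (1 - p) / p * log W = (p - 1) / p * -log W := by ring
    rw [hlogu] at hlog
    linarith [neg_div p (log W)]

theorem Fintype.sum_piFinset_const_succ {α M : Type*} [DecidableEq α] [AddCommMonoid M]
    (s : Finset α) {k : ℕ} (f : (Fin (k + 1) → α) → M) :
    ∑ x ∈ piFinset fun _ => s, f x = ∑ a ∈ s, ∑ y ∈ piFinset fun _ => s, f (Fin.snoc y a) := by
  have := Finset.filter_piFinset_eq_map_snocEquiv (fun _ : Fin (k + 1) => s) (fun _ => True)
  simp only [Finset.filter_true] at this
  rw [this, Finset.sum_map, Finset.sum_product]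
  rfl

namespace HScut

section Wseq

variable {w : ℕ → ℝ} {m : ℕ}

theorem Wseq_succ {n : ℕ} (hn : 1 ≤ n) :
    Wseq w (n + 1) = w (n + 1) + Wseq w n ^ (((n : ℝ) + 1) / n) := by
  obtain ⟨k, rfl⟩ : ∃ k, n = k + 1 := ⟨n - 1, by omega⟩
  rw [Wseq]
  push_cast
  ring_nf

theorem Wseq_pos (h1 : 0 < w 1) (hw : ∀ k, 1 ≤ k → k ≤ m → 0 ≤ w k) {i : ℕ} (hi : 1 ≤ i)
    (him : i ≤ m) : 0 < Wseq w i := by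
  induction i, hi using Nat.le_induction with
  | base => exact h1
  | succ i hi ih =>
    rw [Wseq_succ hi]
    exact add_pos_of_nonneg_of_pos (hw _ (by omega) him) (rpow_pos_of_pos (ih (by omega)) _)

theorem one_le_Mseq {i : ℕ} (hi : 1 ≤ i) (hW : 0 < Wseq w i) : 1 ≤ Mseq w i :=
  one_le_max_rpow hW (div_nonpos_of_nonpos_of_nonneg (by simp [hi]) (Nat.cast_nonneg i))

theorem one_le_prod_Mseq (h1 : 0 < w 1) (hw : ∀ k, 1 ≤ k → k ≤ m → 0 ≤ w k) :
    1 ≤ ∏ i ∈ Icc 1 (m - 1), Mseq w i :=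
  Finset.one_le_prod fun i hi => by
    rw [Finset.mem_Icc] at hi
    exact one_le_Mseq hi.1 (Wseq_pos h1 hw hi.1 (by omega))

theorem sum_Icc_eq_Wseq_add_sum (k : ℕ) :
    ∑ i ∈ Icc 1 (k + 1), w i =
      Wseq w (k + 1) + ∑ i ∈ Icc 1 k, (Wseq w i - Wseq w i ^ (((i : ℝ) + 1) / i)) := by
  induction k with
  | zero => simp [Wseq]
  | succ k ih =>
    rw [Finset.sum_Icc_succ_top (by omega), ih, Finset.sum_Icc_succ_top (by omega),
      Wseq_succ (n := k + 1) (by omega)]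
    push_cast
    ring

theorem exp_sum_Icc_le (h1 : 0 < w 1) (hw : ∀ k, 1 ≤ k → k ≤ m → 0 ≤ w k) (hm : 1 ≤ m) :
    exp (∑ i ∈ Icc 1 m, w i) ≤ 4 * exp (Wseq w m) * ∏ i ∈ Icc 1 (m - 1), Mseq w i := by
  obtain ⟨k, rfl⟩ : ∃ k, m = k + 1 := ⟨m - 1, by omega⟩
  rw [Nat.add_sub_cancel, sum_Icc_eq_Wseq_add_sum, exp_add, exp_sum]
  -- only the factor `i = 1` can exceed `M_i`
  have hfactor : ∀ i ∈ Icc 1 k, exp (Wseq w i - Wseq w i ^ (((i : ℝ) + 1) / i)) ≤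
      (if i = 1 then 4 else 1) * Mseq w i := by
    intro i hi
    rw [Finset.mem_Icc] at hi
    have hW := Wseq_pos h1 hw hi.1 (by omega)
    split_ifs with hi1
    · subst hi1
      rw [show (((1 : ℕ) : ℝ) + 1) / ((1 : ℕ) : ℝ) = (2 : ℕ) by norm_num, rpow_natCast]
      calc exp (Wseq w 1 - Wseq w 1 ^ 2) ≤ exp 1 := exp_le_exp.2 (by nlinarith)
        _ ≤ 4 := (exp_one_lt_d9.trans (by norm_num)).le
        _ ≤ 4 * Mseq w 1 := le_mul_of_one_le_right (by norm_num) (one_le_Mseq le_rfl hW)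
    · rw [one_mul]
      exact exp_sub_rpow_le_max_rpow hW (by exact_mod_cast (show 2 ≤ i by omega))
  calc exp (Wseq w (k + 1)) * ∏ i ∈ Icc 1 k, exp (Wseq w i - Wseq w i ^ (((i : ℝ) + 1) / i))
      ≤ exp (Wseq w (k + 1)) * ∏ i ∈ Icc 1 k, (if i = 1 then 4 else 1) * Mseq w i := by
        gcongr with i hi
        exact hfactor i hi
    _ ≤ 4 * exp (Wseq w (k + 1)) * ∏ i ∈ Icc 1 k, Mseq w i := by
        rw [Finset.prod_mul_distrib, Finset.prod_ite_eq']
        have := one_le_prod_Mseq (m := k + 1) h1 hw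
        rw [Nat.add_sub_cancel] at this
        split_ifs <;> nlinarith [exp_pos (Wseq w (k + 1))]

theorem exp_sum_mul_prod_Mseq_le_Gconst (h1 : 0 < w 1) (hw : ∀ k, 1 ≤ k → k ≤ m → 0 ≤ w k)
    (hm : 1 ≤ m) :
    exp (∑ i ∈ Icc 1 m, w i) * ∏ i ∈ Icc 1 (m - 1), Mseq w i ≤ 2 * Gconst w m * m := by
  have hm' : (1 : ℝ) ≤ m := by exact_mod_cast hm
  have hscale : (1 : ℝ) ≤ m * m * max (Wseq w m) 1 :=
    one_le_mul_of_one_le_of_one_le (one_le_mul_of_one_le_of_one_le hm' hm') (le_max_right _ _)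
  have hP := one_le_prod_Mseq h1 hw
  have hexp := exp_sum_Icc_le h1 hw hm
  rw [Gconst, Finset.prod_pow]
  set P := ∏ i ∈ Icc 1 (m - 1), Mseq w i
  calc exp (∑ i ∈ Icc 1 m, w i) * P ≤ 4 * exp (Wseq w m) * P * P := by gcongr
    _ = 4 * exp (Wseq w m) * P ^ 2 * 1 := by ring
    _ ≤ 4 * exp (Wseq w m) * P ^ 2 * (m * m * max (Wseq w m) 1) := by gcongr
    _ = 2 * (2 * m * max (Wseq w m) 1 * exp (Wseq w m) * P ^ 2) * m := by ring

end Wseq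

/-- The part of degree at least `K` in `x` of `∏_{i=1}^m ∑_{c ≤ N} (w_i x^i)^c / c!`,
evaluated at `x = 1`. -/
def expTail (w : ℕ → ℝ) (m N K : ℕ) : ℝ :=
  ∑ c ∈ Fintype.piFinset (fun _ : Fin m => range (N + 1)) with
      K ≤ ∑ i : Fin m, ((i : ℕ) + 1) * c i,
    ∏ i : Fin m, w ((i : ℕ) + 1) ^ c i / (c i)!

theorem expTail_zero_dim (w : ℕ → ℝ) (N K : ℕ) : expTail w 0 N K = if K = 0 then 1 else 0 := by
  rw [expTail, Fintype.piFinset_of_isEmpty]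
  split_ifs with hK <;> simp [hK, Finset.univ_unique]

theorem expTail_zero_trunc (w : ℕ → ℝ) (m K : ℕ) : expTail w m 0 K = if K = 0 then 1 else 0 := by
  rw [expTail, zero_add, Finset.range_one, Fintype.piFinset_singleton (fun _ => 0)]
  split_ifs with hK <;> simp [hK, Finset.filter_singleton]

theorem expTail_succ_dim (w : ℕ → ℝ) (m N K : ℕ) :
    expTail w (m + 1) N K =
      ∑ a ∈ range (N + 1), w (m + 1) ^ a / a ! * expTail w m N (K - (m + 1) * a) := by
  rw [expTail, Finset.sum_filter, Fintype.sum_piFinset_const_succ]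
  refine Finset.sum_congr rfl fun a _ => ?_
  rw [expTail, Finset.mul_sum, Finset.sum_filter]
  refine Finset.sum_congr rfl fun c _ => ?_
  simp only [Fin.sum_univ_castSucc, Fin.prod_univ_castSucc, Fin.snoc_castSucc, Fin.snoc_last,
    Fin.val_castSucc, Fin.val_last]
  by_cases h : K - (m + 1) * a ≤ ∑ i : Fin m, ((i : ℕ) + 1) * c i
  · rw [if_pos (by omega), if_pos h, mul_comm]
  · rw [if_neg (by omega), if_neg h]

section expTail

variable {w : ℕ → ℝ} {m : ℕ}

theorem prod_pow_div_factorial_nonneg (hw : ∀ k, 1 ≤ k → k ≤ m → 0 ≤ w k) (c : Fin m → ℕ) :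
    0 ≤ ∏ i : Fin m, w ((i : ℕ) + 1) ^ c i / (c i)! :=
  Finset.prod_nonneg fun i _ => by
    have := hw ((i : ℕ) + 1) (by omega) i.isLt
    positivity

theorem expTail_nonneg (hw : ∀ k, 1 ≤ k → k ≤ m → 0 ≤ w k) (N K : ℕ) : 0 ≤ expTail w m N K :=
  Finset.sum_nonneg fun c _ => prod_pow_div_factorial_nonneg hw c

theorem expTail_antitone (hw : ∀ k, 1 ≤ k → k ≤ m → 0 ≤ w k) (N : ℕ) :
    Antitone (expTail w m N) := fun _ _ hK =>
  Finset.sum_le_sum_of_subset_of_nonneg (Finset.monotone_filter_right _ fun _ _ => hK.trans)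
    fun c _ _ => prod_pow_div_factorial_nonneg hw c

-- Raising the `i`-th exponent by one is injective and raises the degree by `i + 1`.
theorem expTail_sub_le (hw : ∀ k, 1 ≤ k → k ≤ m → 0 ≤ w k) (i : Fin m) (N K : ℕ) :
    expTail w m N (K - (i + 1)) ≤
      ∑ c ∈ Fintype.piFinset (fun _ : Fin m => range (N + 2)) with
          K ≤ ∑ j : Fin m, ((j : ℕ) + 1) * c j,
        (if c i = 0 then 0 else w ((i : ℕ) + 1) ^ (c i - 1) / (c i - 1)!) *
          ∏ j ∈ Finset.univ.erase i, w ((j : ℕ) + 1) ^ c j / (c j)! := by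
  set G : (Fin m → ℕ) → ℝ := fun c =>
    (if c i = 0 then 0 else w ((i : ℕ) + 1) ^ (c i - 1) / (c i - 1)!) *
      ∏ j ∈ Finset.univ.erase i, w ((j : ℕ) + 1) ^ c j / (c j)!
  set e : Fin m → ℕ := Pi.single i 1
  have hdeg : ∀ c : Fin m → ℕ, ∑ j : Fin m, ((j : ℕ) + 1) * (c + e) j =
      ∑ j : Fin m, ((j : ℕ) + 1) * c j + (i + 1) := by
    intro c
    simp [e, mul_add, Finset.sum_add_distrib, Pi.single_apply]
  have hG : ∀ c, G (c + e) = ∏ j : Fin m, w ((j : ℕ) + 1) ^ c j / (c j)! := by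
    intro c
    rw [← Finset.mul_prod_erase _ _ (Finset.mem_univ i)]
    simp only [G, e, Pi.add_apply, Pi.single_eq_same, Nat.add_sub_cancel, Nat.add_one_ne_zero,
      if_false]
    congr 1
    exact Finset.prod_congr rfl fun j hj => by
      rw [Pi.single_eq_of_ne (Finset.ne_of_mem_erase hj), add_zero]
  calc expTail w m N (K - (i + 1))
      = ∑ c ∈ Fintype.piFinset (fun _ : Fin m => range (N + 1)) with
          K - (i + 1) ≤ ∑ j : Fin m, ((j : ℕ) + 1) * c j, G (c + e) :=
        Finset.sum_congr rfl fun c _ => (hG c).symm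
    _ = ∑ c ∈ ({c ∈ Fintype.piFinset (fun _ : Fin m => range (N + 1)) |
          K - (i + 1) ≤ ∑ j : Fin m, ((j : ℕ) + 1) * c j}).image (· + e), G c :=
        (Finset.sum_image fun _ _ _ _ h => add_right_cancel h).symm
    _ ≤ _ := by
      refine Finset.sum_le_sum_of_subset_of_nonneg ?_ fun c _ _ => ?_
      · intro c hc
        simp only [Finset.mem_image, Finset.mem_filter, Fintype.mem_piFinset,
          Finset.mem_range] at hc ⊢
        obtain ⟨c, ⟨hbox, hK⟩, rfl⟩ := hc
        refine ⟨fun j => ?_, by rw [hdeg]; omega⟩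
        have := hbox j
        simp only [e, Pi.add_apply, Pi.single_apply]
        split_ifs <;> omega
      · have := hw ((i : ℕ) + 1) (by omega) i.isLt
        exact mul_nonneg (by split_ifs <;> positivity) (Finset.prod_nonneg fun j _ => by
          have := hw ((j : ℕ) + 1) (by omega) j.isLt
          positivity)

theorem expTail_add_sum_le_expTail_succ {ρ : ℕ → ℝ} (hρ : ∀ k, 1 ≤ k → k ≤ m → 0 ≤ ρ k)
    (ν K : ℕ) :
    expTail (fun k => ν * ρ k) m ν K +
        ∑ i : Fin m, ρ ((i : ℕ) + 1) * expTail (fun k => ν * ρ k) m ν (K - (i + 1)) ≤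
      expTail (fun k => ((ν : ℝ) + 1) * ρ k) m (ν + 1) K := by
  set x : ℕ → ℝ := fun k => ν * ρ k
  have hx : ∀ k, 1 ≤ k → k ≤ m → 0 ≤ x k := fun k h1 h2 =>
    mul_nonneg (Nat.cast_nonneg ν) (hρ k h1 h2)
  set F := {c ∈ Fintype.piFinset (fun _ : Fin m => range (ν + 2)) |
    K ≤ ∑ j : Fin m, ((j : ℕ) + 1) * c j}
  set A : (Fin m → ℕ) → Fin m → ℝ := fun c j => x ((j : ℕ) + 1) ^ c j / (c j)!
  set B : (Fin m → ℕ) → Fin m → ℝ := fun c j => ρ ((j : ℕ) + 1) *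
    (if c j = 0 then 0 else x ((j : ℕ) + 1) ^ (c j - 1) / (c j - 1)!)
  have hA : ∀ c j, 0 ≤ A c j := fun c j => by
    have := hx ((j : ℕ) + 1) (by omega) j.isLt
    positivity
  have hB : ∀ c j, 0 ≤ B c j := fun c j => by
    have := hx ((j : ℕ) + 1) (by omega) j.isLt
    have := hρ ((j : ℕ) + 1) (by omega) j.isLt
    exact mul_nonneg this (by split_ifs <;> positivity)
  have hbox : expTail x m ν K ≤ ∑ c ∈ F, ∏ j, A c j := by
    refine Finset.sum_le_sum_of_subset_of_nonneg (Finset.filter_subset_filter _ ?_)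
      fun c _ _ => Finset.prod_nonneg fun j _ => hA c j
    exact Fintype.piFinset_subset _ _ fun _ => Finset.range_subset_range.2 (by omega)
  have hshift : ∀ i : Fin m, ρ ((i : ℕ) + 1) * expTail x m ν (K - (i + 1)) ≤
      ∑ c ∈ F, B c i * ∏ j ∈ Finset.univ.erase i, A c j := by
    intro i
    refine (mul_le_mul_of_nonneg_left (expTail_sub_le hx i ν K)
      (hρ _ (by omega) i.isLt)).trans_eq ?_
    rw [Finset.mul_sum]
    exact Finset.sum_congr rfl fun c _ => (mul_assoc _ _ _).symm
  have hcoord : ∀ c j, A c j + B c j ≤ (((ν : ℝ) + 1) * ρ ((j : ℕ) + 1)) ^ c j / (c j)! := by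
    intro c j
    have hxρ : x ((j : ℕ) + 1) + ρ ((j : ℕ) + 1) = ((ν : ℝ) + 1) * ρ ((j : ℕ) + 1) := by
      simp only [x]; ring
    cases h : c j with
    | zero => simp [A, B, h]
    | succ k =>
      simp only [A, B, h, Nat.add_one_ne_zero, if_false, Nat.add_sub_cancel, ← mul_div_assoc,
        ← hxρ]
      exact pow_succ_div_factorial_add_le (hx _ (by omega) j.isLt) (hρ _ (by omega) j.isLt) k
  calc expTail x m ν K + ∑ i : Fin m, ρ ((i : ℕ) + 1) * expTail x m ν (K - (i + 1))
      ≤ ∑ c ∈ F, ∏ j, A c j + ∑ i : Fin m, ∑ c ∈ F, B c i * ∏ j ∈ Finset.univ.erase i, A c j :=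
        add_le_add hbox (Finset.sum_le_sum fun i _ => hshift i)
    _ = ∑ c ∈ F, (∏ j, A c j + ∑ i : Fin m, B c i * ∏ j ∈ Finset.univ.erase i, A c j) := by
        rw [Finset.sum_comm, Finset.sum_add_distrib]
    _ ≤ ∑ c ∈ F, ∏ j, (A c j + B c j) := Finset.sum_le_sum fun c _ =>
        Finset.prod_add_sum_mul_prod_erase_le_prod_add _ (fun j _ => hA c j) fun j _ => hB c j
    _ ≤ expTail (fun k => ((ν : ℝ) + 1) * ρ k) m (ν + 1) K := Finset.sum_le_sum fun c _ =>
        Finset.prod_le_prod (fun j _ => add_nonneg (hA c j) (hB c j)) fun j _ => hcoord c j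

theorem expTail_one_le (hw : 0 ≤ w 1) (N j : ℕ) :
    expTail w 1 N j ≤ exp (w 1) * (w 1 ^ j / j !) := by
  rw [expTail_succ_dim]
  simp only [expTail_zero_dim, zero_add, one_mul, mul_ite, mul_one, mul_zero,
    Nat.sub_eq_zero_iff_le]
  rw [← Finset.sum_filter, mul_comm]
  exact sum_filter_le_pow_div_factorial_le hw _ j

theorem expTail_succ_mul_le {n N : ℕ} (hn : 1 ≤ n) (hw : ∀ k, 1 ≤ k → k ≤ n → 0 ≤ w k)
    (hW : 0 < Wseq w n) {D : ℝ} (hD : ∀ j, expTail w n N (n * j) ≤ D * (Wseq w n ^ j / j !))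
    (b : ℕ) :
    expTail w n N ((n + 1) * b) ≤
      D * (Mseq w n * ((Wseq w n ^ (((n : ℝ) + 1) / n)) ^ b / b !)) := by
  have hD0 : 0 ≤ D := (expTail_nonneg hw N 0).trans (by simpa using hD 0)
  have hdeg : n * (b + b / n) ≤ (n + 1) * b := by
    rw [Nat.mul_add, add_mul, one_mul]
    exact Nat.add_le_add_left (Nat.mul_div_le b n) _
  calc expTail w n N ((n + 1) * b) ≤ expTail w n N (n * (b + b / n)) :=
        expTail_antitone hw N hdeg
    _ ≤ D * (Wseq w n ^ (b + b / n) / (b + b / n)!) := hD _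
    _ ≤ _ := mul_le_mul_of_nonneg_left (pow_add_div_div_factorial_le hW hn b) hD0

theorem expTail_succ_dim_mul_le {n N : ℕ} (hn : 1 ≤ n)
    (hw : ∀ k, 1 ≤ k → k ≤ n + 1 → 0 ≤ w k) (hW : 0 < Wseq w n) {D : ℝ}
    (hD : ∀ j, expTail w n N (n * j) ≤ D * (Wseq w n ^ j / j !)) (j : ℕ) :
    expTail w (n + 1) N ((n + 1) * j) ≤
      D * Mseq w n * exp (w (n + 1)) * (Wseq w (n + 1) ^ j / j !) := by
  have hwn : ∀ k, 1 ≤ k → k ≤ n → 0 ≤ w k := fun k h1 h2 => hw k h1 (by omega)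
  have hE0 : expTail w n N 0 ≤ D := by simpa using hD 0
  rw [expTail_succ_dim, Wseq_succ hn]
  refine sum_pow_div_factorial_mul_le (hw _ (by omega) le_rfl) (rpow_pos_of_pos hW _).le
    (one_le_Mseq hn hW) ((expTail_nonneg hwn N 0).trans hE0) (fun a _ => ?_) (fun a ha => ?_) _
  · rw [← Nat.mul_sub]
    exact expTail_succ_mul_le hn hwn hW hD (j - a)
  · rwa [Nat.sub_eq_zero_of_le (Nat.mul_le_mul_left _ ha.le)]

theorem expTail_mul_le (h1 : 0 < w 1) (hw : ∀ k, 1 ≤ k → k ≤ m → 0 ≤ w k)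
    (hm : 1 ≤ m) (N j : ℕ) :
    expTail w m N (m * j) ≤
      exp (∑ i ∈ Icc 1 m, w i) * (∏ i ∈ Icc 1 (m - 1), Mseq w i) * (Wseq w m ^ j / j !) := by
  induction m, hm using Nat.le_induction generalizing j with
  | base => simpa [Wseq] using expTail_one_le h1.le N j
  | succ n hn ih =>
    have hwn : ∀ k, 1 ≤ k → k ≤ n → 0 ≤ w k := fun k h1 h2 => hw k h1 (by omega)
    refine (expTail_succ_dim_mul_le hn hw (Wseq_pos h1 hw hn (by omega)) (ih hwn) j).trans_eq ?_
    obtain ⟨k, rfl⟩ : ∃ k, n = k + 1 := ⟨n - 1, by omega⟩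
    rw [Finset.sum_Icc_succ_top (b := k + 1) (by omega), exp_add, Nat.add_sub_cancel,
      Nat.add_sub_cancel, Finset.prod_Icc_succ_top (b := k) (by omega)]
    ring

end expTail

def posJumpSum (n : ℕ) (s : Fin n → ℤ) : ℕ := ∑ i, (s i).toNat

-- the paper's weights `r_v`, with `r_0 = q_0` and `r_{±i} = w_i / n`
def symMax (q : ℤ → ℝ) (v : ℤ) : ℝ := max (q v) (q (-v))

section paths

variable {m : ℕ}

theorem levelAt_le_posJumpSum {n : ℕ} (s : Fin n → ℤ) : levelAt n s n ≤ posJumpSum n s := by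
  rw [levelAt, Finset.filter_true_of_mem fun i _ => i.isLt, posJumpSum, Nat.cast_sum]
  exact Finset.sum_le_sum fun i _ => Int.self_le_toNat _

theorem modWeight_eq_pathWeight_symMax (n : ℕ) (q : ℤ → ℝ) (s : Fin n → ℤ) :
    modWeight n q s = pathWeight n (symMax q) s :=
  Finset.prod_congr rfl fun i _ => by
    split_ifs with h
    · rw [symMax, h, neg_zero, max_self]
    · rfl

theorem pathWeight_nonneg {r : ℤ → ℝ} (hr : ∀ v, -(m : ℤ) ≤ v → v ≤ m → 0 ≤ r v) {n : ℕ}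
    {s : Fin n → ℤ} (hs : s ∈ paths n m) : 0 ≤ pathWeight n r s :=
  Finset.prod_nonneg fun i _ => by
    have := Finset.mem_Icc.1 (Fintype.mem_piFinset.1 hs i)
    exact hr _ this.1 this.2

theorem posJumpSum_snoc {ν : ℕ} (t : Fin ν → ℤ) (v : ℤ) :
    posJumpSum (ν + 1) (Fin.snoc t v) = posJumpSum ν t + v.toNat := by
  simp only [posJumpSum, Fin.sum_univ_castSucc, Fin.snoc_castSucc, Fin.snoc_last]

theorem pathWeight_snoc {ν : ℕ} (r : ℤ → ℝ) (t : Fin ν → ℤ) (v : ℤ) :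
    pathWeight (ν + 1) r (Fin.snoc t v) = r v * pathWeight ν r t := by
  simp only [pathWeight, Fin.prod_univ_castSucc, Fin.snoc_castSucc, Fin.snoc_last, mul_comm]

theorem sum_pathWeight_filter_succ (r : ℤ → ℝ) (ν K : ℕ) :
    ∑ s ∈ paths (ν + 1) m with K ≤ posJumpSum (ν + 1) s, pathWeight (ν + 1) r s =
      ∑ v ∈ Icc (-(m : ℤ)) m,
        r v * ∑ t ∈ paths ν m with K - v.toNat ≤ posJumpSum ν t, pathWeight ν r t := by
  rw [Finset.sum_filter, paths, Fintype.sum_piFinset_const_succ]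
  refine Finset.sum_congr rfl fun v _ => ?_
  rw [Finset.mul_sum, Finset.sum_filter]
  refine Finset.sum_congr rfl fun t _ => ?_
  rw [posJumpSum_snoc, pathWeight_snoc]
  by_cases h : K - v.toNat ≤ posJumpSum ν t
  · rw [if_pos (by omega), if_pos h]
  · rw [if_neg (by omega), if_neg h]

theorem sum_Icc_one_eq_sum_fin {M : Type*} [AddCommMonoid M] (f : ℤ → M) :
    ∑ v ∈ Icc (1 : ℤ) m, f v = ∑ i : Fin m, f ((i : ℕ) + 1) := by
  refine (Finset.sum_bij (fun (i : Fin m) _ => ((i : ℕ) : ℤ) + 1) (fun i _ => ?_)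
    (fun i _ j _ h => ?_) (fun v hv => ?_) fun _ _ => rfl).symm
  · simp only [Finset.mem_Icc]; omega
  · exact Fin.ext (by omega)
  · rw [Finset.mem_Icc] at hv
    exact ⟨⟨v.toNat - 1, by omega⟩, Finset.mem_univ _,
      show ((v.toNat - 1 : ℕ) : ℤ) + 1 = v by omega⟩

-- Only positive jumps raise `posJumpSum`; the non-positive ones carry total mass at most one.
theorem sum_pathWeight_filter_le_expTail {r : ℤ → ℝ} (hr : ∀ v, -(m : ℤ) ≤ v → v ≤ m → 0 ≤ r v)
    (hmass : ∑ v ∈ Icc (-(m : ℤ)) 0, r v ≤ 1) (ν K : ℕ) :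
    ∑ s ∈ paths ν m with K ≤ posJumpSum ν s, pathWeight ν r s ≤
      expTail (fun k => ν * r k) m ν K := by
  induction ν generalizing K with
  | zero =>
    rw [expTail_zero_trunc, paths, Fintype.piFinset_of_isEmpty, Finset.univ_unique]
    split_ifs with hK <;> simp [hK, posJumpSum, pathWeight, Finset.filter_singleton]
  | succ ν ih =>
    set S := fun K' => ∑ t ∈ paths ν m with K' ≤ posJumpSum ν t, pathWeight ν r t
    have hS : ∀ K', 0 ≤ S K' := fun K' =>
      Finset.sum_nonneg fun t ht => pathWeight_nonneg hr (Finset.mem_filter.1 ht).1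
    have hsplit : Icc (-(m : ℤ)) m = Icc (-(m : ℤ)) 0 ∪ Icc 1 m := by
      ext v; simp only [Finset.mem_Icc, Finset.mem_union]; omega
    have hdisj : Disjoint (Icc (-(m : ℤ)) 0) (Icc 1 m) :=
      Finset.disjoint_left.2 fun v h1 h2 => by
        rw [Finset.mem_Icc] at h1 h2; omega
    have hnonpos : ∑ v ∈ Icc (-(m : ℤ)) 0, r v * S (K - v.toNat) ≤
        expTail (fun k => ν * r k) m ν K := by
      calc ∑ v ∈ Icc (-(m : ℤ)) 0, r v * S (K - v.toNat)
          = (∑ v ∈ Icc (-(m : ℤ)) 0, r v) * S K := by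
            rw [Finset.sum_mul]
            refine Finset.sum_congr rfl fun v hv => ?_
            rw [Finset.mem_Icc] at hv
            rw [Int.toNat_eq_zero.2 hv.2, Nat.sub_zero]
        _ ≤ S K := mul_le_of_le_one_left (hS K) hmass
        _ ≤ _ := ih K
    have hpos : ∑ v ∈ Icc (1 : ℤ) m, r v * S (K - v.toNat) ≤
        ∑ i : Fin m, r ((i : ℕ) + 1) * expTail (fun k => ν * r k) m ν (K - (i + 1)) := by
      rw [sum_Icc_one_eq_sum_fin]
      refine Finset.sum_le_sum fun i _ => ?_
      have hi : (((i : ℕ) : ℤ) + 1).toNat = i + 1 := by omega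
      rw [hi]
      exact mul_le_mul_of_nonneg_left (ih _) (hr _ (by omega) (by omega))
    rw [sum_pathWeight_filter_succ, hsplit, Finset.sum_union hdisj]
    refine (add_le_add hnonpos hpos).trans ?_
    push_cast
    exact expTail_add_sum_le_expTail_succ (ρ := fun k : ℕ => r k)
      (fun k h1 h2 => hr k (by omega) (by omega)) ν K

theorem sum_Icc_nonpos_symMax_le_one {q : ℤ → ℝ}
    (hq : ∀ l : ℤ, -(m : ℤ) ≤ l → l ≤ m → 0 ≤ q l) (hsum : ∑ l ∈ Icc (-(m : ℤ)) m, q l = 1) :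
    ∑ v ∈ Icc (-(m : ℤ)) 0, symMax q v ≤ 1 := by
  have h0 : (0 : ℤ) ∉ Icc (-(m : ℤ)) (-1) ∪ Icc 1 m := by
    simp only [Finset.mem_union, Finset.mem_Icc]; omega
  have hnonpos : Icc (-(m : ℤ)) 0 = insert 0 (Icc (-(m : ℤ)) (-1)) := by
    ext v; simp only [Finset.mem_insert, Finset.mem_Icc]; omega
  have hall : Icc (-(m : ℤ)) m = insert 0 (Icc (-(m : ℤ)) (-1) ∪ Icc 1 m) := by
    ext v; simp only [Finset.mem_insert, Finset.mem_union, Finset.mem_Icc]; omega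
  have hdisj : Disjoint (Icc (-(m : ℤ)) (-1)) (Icc 1 m) :=
    Finset.disjoint_left.2 fun v h1 h2 => by rw [Finset.mem_Icc] at h1 h2; omega
  have hreflect : ∑ v ∈ Icc (-(m : ℤ)) (-1), q (-v) = ∑ v ∈ Icc (1 : ℤ) m, q v :=
    Finset.sum_nbij' (fun v => -v) (fun v => -v)
      (fun v hv => by simp only [Finset.mem_Icc] at hv ⊢; omega)
      (fun v hv => by simp only [Finset.mem_Icc] at hv ⊢; omega)
      (fun v _ => neg_neg v) (fun v _ => neg_neg v) fun _ _ => rfl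
  calc ∑ v ∈ Icc (-(m : ℤ)) 0, symMax q v
      = q 0 + ∑ v ∈ Icc (-(m : ℤ)) (-1), symMax q v := by
        rw [hnonpos, Finset.sum_insert (by simp), symMax, neg_zero, max_self]
    _ ≤ q 0 + ∑ v ∈ Icc (-(m : ℤ)) (-1), (q v + q (-v)) := by
        gcongr with v hv
        rw [Finset.mem_Icc] at hv
        exact max_le_add_of_nonneg (hq v hv.1 (by omega)) (hq (-v) (by omega) (by omega))
    _ = 1 := by
        rw [← hsum, hall, Finset.sum_insert h0, Finset.sum_union hdisj, Finset.sum_add_distrib,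
          hreflect]

theorem sum_Icc_qtilde_le {n : ℕ} {q : ℤ → ℝ} (hq : ∀ l : ℤ, -(m : ℤ) ≤ l → l ≤ m → 0 ≤ q l)
    (a b : ℕ) :
    ∑ k ∈ Icc a b, qtilde n m q k ≤ ∑ s ∈ paths n m with a ≤ posJumpSum n s, modWeight n q s := by
  have hnonneg : ∀ s ∈ paths n m, 0 ≤ modWeight n q s := fun s hs => by
    rw [modWeight_eq_pathWeight_symMax]
    exact pathWeight_nonneg (fun v h1 h2 => (hq v h1 h2).trans (le_max_left _ _)) hs
  rw [← Finset.sum_image (s := Icc a b) (g := ((↑) : ℕ → ℤ)) fun _ _ _ _ h => Nat.cast_inj.1 h]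
  simp only [qtilde]
  rw [Finset.sum_fiberwise_eq_sum_filter]
  refine Finset.sum_le_sum_of_subset_of_nonneg (fun s hs => ?_) fun s hs _ =>
    hnonneg s (Finset.mem_filter.1 hs).1
  simp only [Finset.mem_filter, Finset.mem_image, Finset.mem_Icc] at hs ⊢
  obtain ⟨hs, k, ⟨hak, -⟩, hk⟩ := hs
  refine ⟨hs, ?_⟩
  have := levelAt_le_posJumpSum s
  omega

end paths

end HScut

open HScut

theorem qtilde_tail_sum_bound_general_general (n m : ℕ) (hn : 1 ≤ n) (hm : 1 ≤ m) (q : ℤ → ℝ)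
    (hq : ∀ l : ℤ, -(m : ℤ) ≤ l → l ≤ (m : ℤ) → 0 ≤ q l)
    (hsum : ∑ l ∈ Finset.Icc (-(m : ℤ)) (m : ℤ), q l = 1)
    (hq1 : 0 < max (q 1) (q (-1)))
    (wf : ℕ → ℝ) (hwf : ∀ i : ℕ, wf i = (n : ℝ) * max (q (i : ℤ)) (q (-(i : ℤ))))
    (kbar : ℕ) :
    (∑ k ∈ Finset.Icc kbar (m * n), qtilde n m q (k : ℤ)) ≤
      2 * Gconst wf m * m * Wseq wf m ^ (kbar / m) / (Nat.factorial (kbar / m) : ℝ) := by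
  have hr : ∀ v : ℤ, -(m : ℤ) ≤ v → v ≤ m → 0 ≤ symMax q v := fun v h1 h2 =>
    (hq v h1 h2).trans (le_max_left _ _)
  have hwf' : (fun k : ℕ => (n : ℝ) * symMax q k) = wf := funext fun i => (hwf i).symm
  have hw : ∀ k, 1 ≤ k → k ≤ m → 0 ≤ wf k := fun k h1 h2 => by
    rw [← hwf']; exact mul_nonneg (Nat.cast_nonneg n) (hr k (by omega) (by omega))
  have h1 : 0 < wf 1 := by
    rw [hwf]; exact mul_pos (by exact_mod_cast hn) (by simpa using hq1)
  have hX : 0 ≤ Wseq wf m ^ (kbar / m) / (kbar / m)! := by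
    have := Wseq_pos h1 hw hm le_rfl
    positivity
  calc ∑ k ∈ Icc kbar (m * n), qtilde n m q k
      ≤ ∑ s ∈ paths n m with kbar ≤ posJumpSum n s, pathWeight n (symMax q) s := by
        simpa only [modWeight_eq_pathWeight_symMax] using sum_Icc_qtilde_le hq kbar (m * n)
    _ ≤ expTail wf m n kbar :=
        hwf' ▸ sum_pathWeight_filter_le_expTail hr (sum_Icc_nonpos_symMax_le_one hq hsum) n kbar
    _ ≤ expTail wf m n (m * (kbar / m)) := expTail_antitone hw n (Nat.mul_div_le kbar m)
    _ ≤ exp (∑ i ∈ Icc 1 m, wf i) * (∏ i ∈ Icc 1 (m - 1), Mseq wf i) *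
          (Wseq wf m ^ (kbar / m) / (kbar / m)!) :=
        expTail_mul_le h1 hw hm n (kbar / m)
    _ ≤ 2 * Gconst wf m * m * (Wseq wf m ^ (kbar / m) / (kbar / m)!) :=
        mul_le_mul_of_nonneg_right (exp_sum_mul_prod_Mseq_le_Gconst h1 hw hm) hX
    _ = _ := (mul_div_assoc _ _ _).symm

/-- For every integer `k̄` with `m ⌈2W_m − 1⌉ ≤ k̄ ≤ m n` one has
`∑_{k=k̄}^{mn} q̃^{(n)}(k) ≤ 2 G m · W_m^{⌊k̄/m⌋} / ⌊k̄/m⌋!`. -/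
theorem qtilde_tail_sum_bound_general (n m : ℕ) (hn : 1 ≤ n) (hm : 1 ≤ m) (q : ℤ → ℝ)
    (hq : ∀ l : ℤ, -(m : ℤ) ≤ l → l ≤ (m : ℤ) → 0 ≤ q l)
    (hsum : ∑ l ∈ Finset.Icc (-(m : ℤ)) (m : ℤ), q l = 1)
    (hq1 : 0 < max (q 1) (q (-1)))
    (wf : ℕ → ℝ) (hwf : ∀ i : ℕ, wf i = (n : ℝ) * max (q (i : ℤ)) (q (-(i : ℤ))))
    (kbar : ℕ) (hk1 : (m : ℤ) * ⌈2 * Wseq wf m - 1⌉ ≤ (kbar : ℤ)) (hk2 : kbar ≤ m * n) :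
    (∑ k ∈ Finset.Icc kbar (m * n), qtilde n m q (k : ℤ)) ≤
      2 * Gconst wf m * m * Wseq wf m ^ (kbar / m) / (Nat.factorial (kbar / m) : ℝ) :=
  qtilde_tail_sum_bound_general_general n m hn hm q hq hsum hq1 wf hwf kbar
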